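/- arXiv:1705.10113 — 2 statements merged into one kernel-verified Lean document; each statement's English description precedes it below -/
import Mathlib

section
/- Let t ≥ 27, k ∈ {t-1,t}, and let s ≥ t+k+1 satisfy s ≡ t+k-1 (mod 2). Then g_{⌈(s+1)/2⌉, ⌊(s+1)/2⌋} > g_{t,k} + g(s,t,k). -/
/-! Write `s = t + k - 1 + 2m` with `m ≥ 1`; for `k ∈ {t - 1, t}` the two halves of `s + 1` are
`t + m` and `k + m`, and `g(s,t,k) = c(s,t,k) - 3m`. As `c` is a floor quotient by `s - 1`, the
claim becomes a polynomial inequality in `t, k, m`, and its slack has only positive coefficients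
once `t, k ≥ 2` and `m ≥ 1` are shifted to `0`. -/

def bin3 (n : ℤ) : ℤ := n*(n-1)*(n-2)/6
def dtk (t k : ℤ) : ℤ := t*(t+1)/2 + k*(k+1)/2
def gtk (t k : ℤ) : ℤ := 2 + t*(t+1)*(2*t-5)/6 + k*(k+1)*(2*k-5)/6
def cc (s t k : ℤ) : ℤ := Int.fdiv (bin3 (s+3) - s * dtk t k - 6 - 3*(s-t-k-1)/2 + gtk t k) (s-1)
def dd (s t k : ℤ) : ℤ := bin3 (s+3) - s * dtk t k - 6 - 3*(s-t-k-1)/2 + gtk t k - (s-1) * cc s t k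
def gg (s t k : ℤ) : ℤ := cc s t k - 3 - 3*(s-t-k-1)/2

lemma six_dvd_mul_sub_one_mul_sub_two (n : ℤ) : 6 ∣ n * (n - 1) * (n - 2) := by
  refine (ZMod.intCast_zmod_eq_zero_iff_dvd _ 6).mp ?_
  push_cast
  generalize (n : ZMod 6) = x
  revert x
  decide

lemma six_dvd_mul_add_one_mul_two_mul_sub_five (a : ℤ) : 6 ∣ a * (a + 1) * (2 * a - 5) := by
  refine (ZMod.intCast_zmod_eq_zero_iff_dvd _ 6).mp ?_
  push_cast
  generalize (a : ZMod 6) = x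
  revert x
  decide

lemma six_mul_bin3 (n : ℤ) : 6 * bin3 n = n * (n - 1) * (n - 2) :=
  Int.mul_ediv_cancel' (six_dvd_mul_sub_one_mul_sub_two n)

lemma two_mul_dtk (t k : ℤ) : 2 * dtk t k = t * (t + 1) + k * (k + 1) := by
  rw [dtk, mul_add, Int.mul_ediv_cancel' (Int.even_mul_succ_self t).two_dvd,
    Int.mul_ediv_cancel' (Int.even_mul_succ_self k).two_dvd]

lemma six_mul_gtk (t k : ℤ) :
    6 * gtk t k = 12 + t * (t + 1) * (2 * t - 5) + k * (k + 1) * (2 * k - 5) := by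
  rw [gtk, mul_add, mul_add, Int.mul_ediv_cancel' (six_dvd_mul_add_one_mul_two_mul_sub_five t),
    Int.mul_ediv_cancel' (six_dvd_mul_add_one_mul_two_mul_sub_five k)]
  rfl

lemma cc_lt_iff {s : ℤ} (t k X : ℤ) (hs : 1 < s) :
    cc s t k < X ↔
      bin3 (s + 3) - s * dtk t k - 6 - 3 * (s - t - k - 1) / 2 + gtk t k < X * (s - 1) := by
  rw [cc, Int.fdiv_eq_ediv_of_nonneg _ (by omega), Int.ediv_lt_iff_lt_mul (by omega)]

/-- Three times `(s - 1)(g_{t+m,k+m} - g_{t,k} + 3m)` minus the numerator of `c(s,t,k)`,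
at `s = t + k - 1 + 2m`. -/
lemma cc_slack_pos (t k m : ℤ) (ht : 2 ≤ t) (hk : 2 ≤ k) (hm : 1 ≤ m) :
    0 < 3*t^3*m + 3*t^2*k*m + 9*t^2*m^2 - 9*t^2*m + 3*t*k^2*m + 6*t*k*m^2 - 12*t*k*m
      + 8*t*m^3 - 21*t*m^2 + 7*t*m + 3*k^3*m + 9*k^2*m^2 - 9*k^2*m + 8*k*m^3 - 21*k*m^2
      + 7*k*m + 4*m^4 - 14*m^3 + 8*m^2 - m + 3 := by
  obtain ⟨a, rfl⟩ : ∃ a : ℕ, t = a + 2 := ⟨(t - 2).toNat, by omega⟩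
  obtain ⟨b, rfl⟩ : ∃ b : ℕ, k = b + 2 := ⟨(k - 2).toNat, by omega⟩
  obtain ⟨c, rfl⟩ : ∃ c : ℕ, m = c + 1 := ⟨(m - 1).toNat, by omega⟩
  ring_nf
  positivity

lemma gtk_add_gg_lt (t k m : ℤ) (ht : 2 ≤ t) (hk : 2 ≤ k) (hm : 1 ≤ m) :
    gtk t k + gg (t + k - 1 + 2 * m) t k < gtk (t + m) (k + m) := by
  have hhalf : 3 * (t + k - 1 + 2 * m - t - k - 1) / 2 = 3 * (m - 1) := by omega
  rw [gg, hhalf]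
  suffices cc (t + k - 1 + 2 * m) t k < gtk (t + m) (k + m) - gtk t k + 3 * m by linarith
  rw [cc_lt_iff t k _ (by omega), hhalf]
  refine lt_of_mul_lt_mul_left ?_ (show (0 : ℤ) ≤ 6 by norm_num)
  linear_combination 2 * cc_slack_pos t k m ht hk hm
    - (t + k - 2 + 2 * m) * six_mul_gtk (t + m) (k + m) + (t + k - 1 + 2 * m) * six_mul_gtk t k
    + six_mul_bin3 (t + k - 1 + 2 * m + 3) - 3 * (t + k - 1 + 2 * m) * two_mul_dtk t k

theorem stmt8 (t k s : ℤ) (ht : 27 ≤ t) (hk : k = t - 1 ∨ k = t)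
    (hs : t + k + 1 ≤ s) (hpar : (2:ℤ) ∣ (s - (t+k-1))) :
    gtk t k + gg s t k < gtk ((s+2)/2) ((s+1)/2) := by
  obtain ⟨m, hm⟩ := hpar
  obtain rfl : s = t + k - 1 + 2 * m := by omega
  have hhalves : (t + k - 1 + 2 * m + 2) / 2 = t + m ∧ (t + k - 1 + 2 * m + 1) / 2 = k + m := by
    omega
  rw [hhalves.1, hhalves.2]
  exact gtk_add_gg_lt t k m (by omega) (by omega) (by omega)
end

section
/- Let t ≥ 27, k ∈ {t-1,t}, y ≥ t+k+5 with y ≡ t+k-1 (mod 2), and let g satisfy g_{t,k} + g(y,t,k) ≤ g ≤ g_{t,k} + g(y+2,t,k) - 1. Define a(y+2) and b(y+2) by (y+2)·d_{t,k} + 3 - g + (y+2)·a(y+2) + b(y+2) = binom(y+5,3) with 0 ≤ b(y+2) ≤ y+1. Then a(y+2) ≥ g - g_{t,k} + 3. -/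
/-! Put `s = y + 2`, `e = 3(s-t-k-1)/2`, `G = g - g_{t,k}`, and let `N` be the numerator in the
definition of `c(s)`, so that `(s-1)·c(s) ≤ N` (the remainder `d(s)` is nonnegative). The upper
bound on `g` says `c(s) ≥ G + e + 4`, and the defining equation of `a` gives
`s·a = N + 3 + e + G - b ≥ (s-1)·c(s) + 3 + e + G - (s-1) ≥ s·(G + e + 3)`.
Hence `a ≥ G + e + 3 ≥ G + 3`. -/

theorem dd_eq_fmod (s t k : ℤ) :
    dd s t k = Int.fmod (bin3 (s+3) - s * dtk t k - 6 - 3*(s-t-k-1)/2 + gtk t k) (s-1) :=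
  (Int.fmod_def _ _).symm

theorem dd_nonneg {s : ℤ} (hs : 1 < s) (t k : ℤ) : 0 ≤ dd s t k := by
  rw [dd_eq_fmod]
  exact Int.fmod_nonneg_of_pos _ (by omega)

theorem sub_gtk_add_le_of_le_gg {s t k g a b : ℤ} (hs : 1 < s)
    (hg : g ≤ gtk t k + gg s t k - 1)
    (hab : s * dtk t k + 3 - g + s * a + b = bin3 (s+3)) (hb : b ≤ s - 1) :
    g - gtk t k + 3 + 3*(s-t-k-1)/2 ≤ a := by
  have hc : g - gtk t k + 3*(s-t-k-1)/2 + 4 ≤ cc s t k := by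
    simp only [gg] at hg
    omega
  have hd := dd_nonneg hs t k
  simp only [dd] at hd
  have hsa : s * (g - gtk t k + 3 + 3*(s-t-k-1)/2) ≤ s * a := by
    linarith [mul_le_mul_of_nonneg_left hc (show 0 ≤ s - 1 by omega)]
  exact le_of_mul_le_mul_left hsa (by omega)

theorem stmt14_general (t k y g : ℤ) (ht : 27 ≤ t) (hk : k = t - 1 ∨ k = t)
    (hy : t + k + 5 ≤ y)
    (hg2 : g ≤ gtk t k + gg (y+2) t k - 1)
    (a b : ℤ)
    (hab : (y+2) * dtk t k + 3 - g + (y+2) * a + b = bin3 (y+5))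
    (hb1 : b ≤ y + 1) :
    g - gtk t k + 3 ≤ a := by
  have hab' : (y+2) * dtk t k + 3 - g + (y+2) * a + b = bin3 (y+2+3) := by
    rwa [show y + 2 + 3 = y + 5 by ring]
  have hs : 1 < y + 2 := by omega
  have key := sub_gtk_add_le_of_le_gg hs hg2 hab' (by omega)
  have he : 0 ≤ 3*((y+2)-t-k-1)/2 := by omega
  omega

theorem stmt14 (t k y g : ℤ) (ht : 27 ≤ t) (hk : k = t - 1 ∨ k = t)
    (hy : t + k + 5 ≤ y) (hpar : (2:ℤ) ∣ (y - (t+k-1)))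
    (hg1 : gtk t k + gg y t k ≤ g) (hg2 : g ≤ gtk t k + gg (y+2) t k - 1)
    (a b : ℤ)
    (hab : (y+2) * dtk t k + 3 - g + (y+2) * a + b = bin3 (y+5))
    (hb0 : 0 ≤ b) (hb1 : b ≤ y + 1) :
    g - gtk t k + 3 ≤ a :=
  stmt14_general t k y g ht hk hy hg2 a b hab hb1
end
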